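/- Define B(n; k_0, k_1, …, k_m) = #{p ∈ PK(n) : luck(p) = k_0, ω_1(p) = k_1, and ω_j(p) = k_j − 1 for each 2 ≤ j ≤ m}. Then for every n ≥ 1 and all tuples (k_0, …, k_m) and (l_0, …, l_m) of positive integers with k_0 + ⋯ + k_m = l_0 + ⋯ + l_m, one has B(n; k_0, …, k_m) = B(n; l_0, …, l_m); that is, the joint distribution of lucky cars and of the numbers of cars preferring nodes 1, …, m of the m-caterpillar depends only on n and on the sum of the statistics. -/

import Mathlib

open scoped Classical
open Finset

noncomputable section

/-- The set of positive nondecreasing sequences of length `n` bounded above by `b` is finite. -/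
lemma boundedSeq_finite (n : ℕ) (b : ℕ → ℕ) :
    {p : Fin n → ℕ | Monotone p ∧ ∀ i : Fin n, 1 ≤ p i ∧ p i ≤ b i}.Finite := by
  have h : {p : Fin n → ℕ | Monotone p ∧ ∀ i : Fin n, 1 ≤ p i ∧ p i ≤ b i} ⊆
      Set.pi Set.univ (fun i : Fin n => Set.Iic (b i)) := by
    intro p hp
    rw [Set.mem_pi]
    intro i _
    exact (hp.2 i).2
  exact (Set.Finite.pi fun i : Fin n => Set.finite_Iic (b (i : ℕ))).subset h

/-- The finset of nondecreasing sequences `p : Fin n → ℕ` of positive integers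
with `p i ≤ b i` for all `i`. -/
def BSeq (n : ℕ) (b : ℕ → ℕ) : Finset (Fin n → ℕ) := (boundedSeq_finite n b).toFinset

/-- `PK m n` : the u-parking distributions of length `n`, i.e. nondecreasing sequences
of positive integers with `p i ≤ m*(i-1)+1` (here indexed from `0`, so `p i ≤ m*i+1`). -/
def PK (m n : ℕ) : Finset (Fin n → ℕ) := BSeq n (fun i => m * i + 1)

/-- `luck p` : the number of indices `i` with `p i = m*(i-1)+1` (0-indexed: `m*i+1`). -/
def luck (m : ℕ) {n : ℕ} (p : Fin n → ℕ) : ℕ :=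
  (Finset.univ.filter (fun i : Fin n => p i = m * (i : ℕ) + 1)).card

/-- `freq j p` = `ω_j(p)` : the number of indices `i` with `p i = j`. -/
def freq (j : ℕ) {n : ℕ} (p : Fin n → ℕ) : ℕ :=
  (Finset.univ.filter (fun i : Fin n => p i = j)).card

/-- `hcnt m n k r` = `h_{n,k,r}` : the number of nondecreasing sequences of positive
integers with `p_i ≤ m*(i+k-1) - r` for `1 ≤ i ≤ n` (0-indexed: `p i ≤ m*(i+k) - r`). -/
def hcnt (m n k r : ℕ) : ℕ := (BSeq n (fun i => m * (i + k) - r)).card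

/-- `Cnt m n k` = `C_{n,k}` : the number of `p ∈ PK m n` with `luck p = k`. -/
def Cnt (m n k : ℕ) : ℕ := ((PK m n).filter (fun p => luck m p = k)).card

/-- `Rpoly m n` = `R_n(q) = Σ_k C_{n,k} q^k ∈ ℤ[q]`. -/
def Rpoly (m n : ℕ) : Polynomial ℤ :=
  ∑ k ∈ Finset.range (n + 1), (Cnt m n k : Polynomial ℤ) * Polynomial.X ^ k

/-- `hfull t k` : the complete homogeneous symmetric polynomial of degree `k`
in variables `q_0, …, q_{t-1}`, i.e. the sum of all monomials of total degree `k`. -/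
def hfull (t k : ℕ) : MvPolynomial (Fin t) ℤ :=
  ∑ α ∈ Finset.Nat.antidiagonalTuple t k, ∏ i : Fin t, MvPolynomial.X i ^ α i

/-- `ffix m p ℓ` = `i_ℓ(p)` : the first fixed point of type `ℓ`, the smallest `k` with
`2 ≤ k ≤ n` and `p_k ≥ m*(k-2)+1+ℓ` (1-indexed), or `n+1` if there is none. -/
def ffix (m : ℕ) {n : ℕ} (p : Fin n → ℕ) (ℓ : ℕ) : ℕ :=
  sInf ({k | 2 ≤ k ∧ ∃ i : Fin n, (i : ℕ) + 1 = k ∧ m * (k - 2) + 1 + ℓ ≤ p i} ∪ {n + 1})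

/-- The extended first fixed points: `i_0 = 2`, `i_{m+1} = n+1`, and `i_ℓ = ffix m p ℓ`
for `1 ≤ ℓ ≤ m`. -/
def ffixE (m : ℕ) {n : ℕ} (p : Fin n → ℕ) (j : ℕ) : ℕ :=
  if j = 0 then 2 else if j = m + 1 then n + 1 else ffix m p j

/-- `pget p k` = `p_k` (1-indexed), `0` out of range. -/
def pget {n : ℕ} (p : Fin n → ℕ) (k : ℕ) : ℕ := if h : k - 1 < n then p ⟨k - 1, h⟩ else 0

/-- The `(ℓ+1)`-st part `P_{ℓ+1}` (for `0 ≤ ℓ ≤ m`) of the first-return decomposition of `p`: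
the list `(p_k - (p_{i_ℓ} - 1))` for `i_ℓ ≤ k ≤ i_{ℓ+1} - 1`. -/
def FRD (m : ℕ) {n : ℕ} (p : Fin n → ℕ) (ℓ : ℕ) : List ℕ :=
  (List.range (ffixE m p (ℓ + 1) - ffixE m p ℓ)).map
    (fun t => pget p (ffixE m p ℓ + t) - (pget p (ffixE m p ℓ) - 1))

/-- A list is a u-parking distribution: nondecreasing, with `l.get i ∈ [1, m*i+1]`
(0-indexed). -/
def isPKlist (m : ℕ) (l : List ℕ) : Prop :=
  l.Pairwise (· ≤ ·) ∧ ∀ i : Fin l.length, 1 ≤ l.get i ∧ l.get i ≤ m * (i : ℕ) + 1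

/-- `θ(p)` : the nondecreasing rearrangement of the concatenation of `p` with the list of
all `j ∈ {1, …, m*n-m+1}` with `j ≢ 1 (mod m)`. -/
def theta (m n : ℕ) (p : Fin n → ℕ) : List ℕ :=
  Multiset.sort
    ((List.ofFn p : Multiset ℕ) +
      (((List.range (m * n - m + 1)).map (· + 1)).filter
        (fun j => ¬ j ≡ 1 [MOD m]) : List ℕ)) (· ≤ ·)

/-- Parking distributions on the `m`-caterpillar of length `n`, as nondecreasing lists. -/
def PKcat (m n : ℕ) : Set (List ℕ) :=
  {a | a.length = m * n - m + 1 ∧ a.Pairwise (· ≤ ·) ∧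
       (∀ x ∈ a, 1 ≤ x ∧ x ≤ m * n - m + 1) ∧
       (∀ i : ℕ, 1 ≤ i → i ≤ n →
         m * (i - 1) + 1 ≤ (a.filter (fun x => x ≤ m * (i - 1) + 1)).length) ∧
       (∀ j : ℕ, 1 ≤ j → j ≤ m * n - m + 1 → ¬ j ≡ 1 [MOD m] → j ∈ a)}

/-!
Fix `1 ≤ j ≤ m`. If some car other than the first prefers `j`, `promote` deletes the last such
car (position `a`), shifts the cars on `(a, d]` one place to the left, where `d` is the first
position from which the shifted sequence returns to the lucky line `m * i + 1`, and puts a lucky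
car at `d`. Its inverse `demote` removes the first lucky car after the first one and inserts a
car preferring `j` in its sorted place. Since the new lucky value exceeds `m`, `promote` raises
`luck` by one, lowers `ω_j` by one and fixes every other `ω_c` with `c ≤ m`. Hence `B(n; k)` is
unchanged when a unit moves from `k_j` to `k_0` (all entries staying positive), and such moves
bring every positive vector to `(∑ k - m, 1, …, 1)`.
-/

lemma Finset.card_filter_comp_equiv {ι α : Type*} [Fintype ι] (P : α → Prop) [DecidablePred P]
    (f : ι → α) (σ : Equiv.Perm ι) : #{i | P (f (σ i))} = #{i | P (f i)} :=
  Finset.card_equiv σ (by simp)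

lemma Finset.card_filter_update_add {ι α : Type*} [Fintype ι] [DecidableEq ι] (P : α → Prop)
    [DecidablePred P] (f : ι → α) (i₀ : ι) (v : α) :
    #{i | P (Function.update f i₀ v i)} + (if P (f i₀) then 1 else 0) =
      #{i | P (f i)} + (if P v then 1 else 0) := by
  simp only [Finset.card_filter, ← Finset.add_sum_erase _ _ (Finset.mem_univ i₀),
    Function.update_self]
  rw [Finset.sum_congr rfl fun i hi => by rw [Function.update_of_ne (Finset.ne_of_mem_erase hi)]]
  ring

lemma Fin.exists_mem_one_le_of_one_lt_card {n : ℕ} [NeZero n] {s : Finset (Fin n)}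
    (hs : 1 < #s) : ∃ i ∈ s, 1 ≤ (i : ℕ) := by
  obtain ⟨i, hi, hi0⟩ := Finset.exists_mem_ne hs 0
  exact ⟨i, hi, Nat.one_le_iff_ne_zero.2 (Fin.val_ne_zero_iff.2 hi0)⟩

section Slide

variable {n : ℕ} [NeZero n] {α : Type*} {a d : Fin n}

lemma Fin.val_cycleIcc (had : a ≤ d) (i : Fin n) :
    (Fin.cycleIcc a d i : ℕ) = if a ≤ i ∧ i < d then (i : ℕ) + 1 else if i = d then a else i := by
  rcases lt_or_ge i a with hia | hai
  · rw [Fin.cycleIcc_of_lt hia, if_neg (by omega), if_neg (by omega)]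
  rcases lt_or_ge d i with hdi | hid
  · rw [Fin.cycleIcc_of_gt hdi, if_neg (by omega), if_neg (by omega)]
  rw [Fin.cycleIcc_of_le_of_le hai hid]
  by_cases h : i = d
  · simp [h]
  · rw [if_neg h, if_pos ⟨hai, lt_of_le_of_ne hid h⟩, Fin.val_add, Fin.val_one', Nat.add_mod_mod,
      Nat.mod_eq_of_lt (by omega)]

lemma Fin.val_cycleIcc_symm (had : a ≤ d) (i : Fin n) :
    ((Fin.cycleIcc a d).symm i : ℕ) =
      if i = a then (d : ℕ) else if a < i ∧ i ≤ d then (i : ℕ) - 1 else i := by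
  have h := Fin.val_cycleIcc had ((Fin.cycleIcc a d).symm i)
  rw [Equiv.apply_symm_apply] at h
  split_ifs at h ⊢ <;> omega

lemma Fin.cycleIcc_symm_apply_left (had : a ≤ d) : (Fin.cycleIcc a d).symm a = d := by
  rw [Equiv.symm_apply_eq, Fin.cycleIcc_of_last had]

/-- `slideLeft p a d v` deletes the entry at `a`, moves the entries at `a+1, …, d` one place to
the left and writes `v` at `d`; `slideRight p a d v` deletes the entry at `d`, moves the entries
at `a, …, d-1` one place to the right and writes `v` at `a`. -/
def slideLeft (p : Fin n → α) (a d : Fin n) (v : α) : Fin n → α :=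
  Function.update (p ∘ Fin.cycleIcc a d) d v

def slideRight (p : Fin n → α) (a d : Fin n) (v : α) : Fin n → α :=
  Function.update (p ∘ (Fin.cycleIcc a d).symm) a v

lemma slideLeft_apply_of_ne (p : Fin n → α) (v : α) (had : a ≤ d) {i : Fin n} (hid : i ≠ d) :
    ∃ k, slideLeft p a d v i = p k ∧
      (a ≤ i ∧ i < d ∧ (k : ℕ) = i + 1 ∨ ¬ (a ≤ i ∧ i < d) ∧ k = i) := by
  have hσ := Fin.val_cycleIcc had i
  refine ⟨_, Function.update_of_ne hid _ _, ?_⟩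
  split_ifs at hσ with h
  · exact Or.inl ⟨h.1, h.2, hσ⟩
  · exact Or.inr ⟨h, Fin.ext hσ⟩

lemma slideRight_apply_of_ne (p : Fin n → α) (v : α) (had : a ≤ d) {i : Fin n} (hia : i ≠ a) :
    ∃ k, slideRight p a d v i = p k ∧
      (a < i ∧ i ≤ d ∧ (k : ℕ) + 1 = i ∨ ¬ (a < i ∧ i ≤ d) ∧ k = i) := by
  have hσ := Fin.val_cycleIcc_symm had i
  refine ⟨_, Function.update_of_ne hia _ _, ?_⟩
  rw [if_neg hia] at hσ
  split_ifs at hσ with h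
  · exact Or.inl ⟨h.1, h.2, by omega⟩
  · exact Or.inr ⟨h, Fin.ext hσ⟩

lemma slideRight_slideLeft {p : Fin n → α} {v w : α} (had : a ≤ d) (hw : p a = w) :
    slideRight (slideLeft p a d v) a d w = p := by
  rw [slideRight, slideLeft, Function.update_comp_equiv, Equiv.symm_symm, Function.comp_assoc,
    Equiv.self_comp_symm, Function.comp_id, Fin.cycleIcc_of_last had, Function.update_idem, ← hw,
    Function.update_eq_self]

lemma slideLeft_slideRight {p : Fin n → α} {v w : α} (had : a ≤ d) (hv : p d = v) :
    slideLeft (slideRight p a d w) a d v = p := by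
  rw [slideLeft, slideRight, Function.update_comp_equiv, Function.comp_assoc,
    Equiv.symm_comp_self, Function.comp_id, Fin.cycleIcc_symm_apply_left had,
    Function.update_idem, ← hv,
    Function.update_eq_self]

lemma card_filter_slideLeft_add (P : α → Prop) [DecidablePred P] (p : Fin n → α) (v : α)
    (had : a ≤ d) :
    #{i | P (slideLeft p a d v i)} + (if P (p a) then 1 else 0) =
      #{i | P (p i)} + (if P v then 1 else 0) := by
  have h := Finset.card_filter_update_add P (p ∘ Fin.cycleIcc a d) d v
  simp only [Function.comp_apply, Fin.cycleIcc_of_last had,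
    Finset.card_filter_comp_equiv P p (Fin.cycleIcc a d)] at h
  exact h

lemma card_filter_slideRight_add (P : α → Prop) [DecidablePred P] (p : Fin n → α) (v : α)
    (had : a ≤ d) :
    #{i | P (slideRight p a d v i)} + (if P (p d) then 1 else 0) =
      #{i | P (p i)} + (if P v then 1 else 0) := by
  have h := Finset.card_filter_update_add P (p ∘ (Fin.cycleIcc a d).symm) a v
  simp only [Function.comp_apply, Fin.cycleIcc_symm_apply_left had,
    Finset.card_filter_comp_equiv P p (Fin.cycleIcc a d).symm] at h
  exact h

lemma monotone_slideLeft [Preorder α] {p : Fin n → α} {v : α} (hp : Monotone p) (had : a ≤ d)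
    (hdv : p d ≤ v) (hvp : ∀ i, d < i → v ≤ p i) : Monotone (slideLeft p a d v) := by
  intro i k hik
  have hi := Fin.val_cycleIcc had i
  have hk := Fin.val_cycleIcc had k
  simp only [slideLeft, Function.update_apply, Function.comp_apply]
  split_ifs with hid hkd hkd
  · exact le_rfl
  · exact hvp _ (by rw [Fin.lt_def]; split_ifs at hk <;> omega)
  · exact (hp (by rw [Fin.le_def]; split_ifs at hi <;> omega)).trans hdv
  · exact hp (by rw [Fin.le_def]; split_ifs at hi hk <;> omega)

lemma monotone_slideRight [Preorder α] {p : Fin n → α} {v : α} (hp : Monotone p) (had : a ≤ d)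
    (hpv : ∀ i, i < a → p i ≤ v) (hva : v ≤ p a) : Monotone (slideRight p a d v) := by
  intro i k hik
  have hi := Fin.val_cycleIcc_symm had i
  have hk := Fin.val_cycleIcc_symm had k
  simp only [slideRight, Function.update_apply, Function.comp_apply]
  split_ifs with hia hka hka
  · exact le_rfl
  · refine hva.trans (hp ?_)
    rw [Fin.le_def]
    split_ifs at hk <;> omega
  · exact hpv _ (by rw [Fin.lt_def]; split_ifs at hi <;> omega)
  · refine hp ?_
    rw [Fin.le_def]
    split_ifs at hi hk <;> omega

end Slide

section Parking

variable {m n j : ℕ} {p : Fin n → ℕ}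

lemma mem_PK : p ∈ PK m n ↔ Monotone p ∧ ∀ i : Fin n, 1 ≤ p i ∧ p i ≤ m * i + 1 := by
  rw [PK, BSeq, Set.Finite.mem_toFinset]
  rfl

lemma apply_zero_of_mem_PK [NeZero n] (hp : p ∈ PK m n) : p 0 = 1 := by
  have h := (mem_PK.1 hp).2 0
  rw [Fin.val_zero, mul_zero, zero_add] at h
  omega

def countLE (j : ℕ) (p : Fin n → ℕ) : ℕ := #{i | p i ≤ j}

lemma lt_countLE_iff (hp : Monotone p) (j : ℕ) (i : Fin n) :
    (i : ℕ) < countLE j p ↔ p i ≤ j := by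
  constructor
  · intro hi
    by_contra! hji
    have : countLE j p ≤ i :=
      calc countLE j p ≤ #(Iio i) := card_le_card fun k hk => by
            simp only [mem_filter, mem_univ, true_and] at hk
            exact mem_Iio.2 (lt_of_not_ge fun hik => (hk.trans_lt hji).not_ge (hp hik))
        _ = i := Fin.card_Iio i
    omega
  · intro hij
    calc (i : ℕ) < #(Iic i) := by simp
      _ ≤ countLE j p := card_le_card fun k hk => by
          simpa using (hp (mem_Iic.1 hk)).trans hij

lemma countLE_le (j : ℕ) (p : Fin n → ℕ) : countLE j p ≤ n :=
  (card_le_univ _).trans (Fintype.card_fin n).le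

def nextReturn (m : ℕ) (p : Fin n → ℕ) (a : ℕ) : ℕ :=
  sInf {x | a ≤ x ∧ ∀ i : Fin n, (i : ℕ) = x + 1 → m * x + 1 ≤ p i}

lemma nextReturn_spec {a : ℕ} (ha : a < n) :
    a ≤ nextReturn m p a ∧ nextReturn m p a < n ∧
      (∀ i : Fin n, (i : ℕ) = nextReturn m p a + 1 → m * nextReturn m p a + 1 ≤ p i) ∧
      ∀ x, a ≤ x → x < nextReturn m p a → ∀ i : Fin n, (i : ℕ) = x + 1 → p i < m * x + 1 := by
  have hlast : n - 1 ∈ {x | a ≤ x ∧ ∀ i : Fin n, (i : ℕ) = x + 1 → m * x + 1 ≤ p i} :=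
    ⟨by omega, fun i hi => by omega⟩
  obtain ⟨had, hret⟩ := Nat.sInf_mem ⟨_, hlast⟩
  refine ⟨had, (Nat.sInf_le hlast).trans_lt (by omega), hret, fun x hax hxd i hi => ?_⟩
  by_contra! h
  refine Nat.notMem_of_lt_sInf hxd ⟨hax, fun k hk => ?_⟩
  rwa [Fin.ext (hk.trans hi.symm)]

-- Junk value `sInf ∅ = 0` when no car after the first is lucky; `demote` is never used then.
def firstLucky (m : ℕ) (p : Fin n → ℕ) : ℕ :=
  sInf {x | 1 ≤ x ∧ ∃ i : Fin n, (i : ℕ) = x ∧ p i = m * x + 1}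

/-- The data of `promote`: `p a = j` is the last entry `≤ j`, the entries on `(a, d]` stay below
the lucky line even after moving one place to the left, and those after `d` are at least the
lucky value at `d`. -/
structure IsPromoteWindow (m j : ℕ) (p : Fin n → ℕ) (a d : Fin n) : Prop where
  one_le : 1 ≤ (a : ℕ)
  le : a ≤ d
  apply_left : p a = j
  le_iff : ∀ i, p i ≤ j ↔ i ≤ a
  add_le_of_mem : ∀ i, a < i → i ≤ d → p i + m ≤ m * i
  le_of_gt : ∀ i, d < i → m * d + 1 ≤ p i

/-- The data of `demote`: `j` is inserted at `e` and the first lucky car after `0` sits at `d`. -/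
structure IsDemoteWindow (m j : ℕ) (p : Fin n → ℕ) (e d : Fin n) : Prop where
  one_le : 1 ≤ (e : ℕ)
  le : e ≤ d
  le_iff : ∀ i, p i ≤ j ↔ i < e
  apply_right : p d = m * d + 1
  le_of_lt : ∀ i : Fin n, 1 ≤ (i : ℕ) → i < d → p i ≤ m * i

lemma exists_isPromoteWindow (hp : p ∈ PK m n) (hpos : ∃ i : Fin n, 1 ≤ (i : ℕ) ∧ p i = j) :
    ∃ a d, IsPromoteWindow m j p a d := by
  obtain ⟨hmono, -⟩ := mem_PK.1 hp
  obtain ⟨i, hi1, hij⟩ := hpos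
  have hic := (lt_countLE_iff hmono j i).2 hij.le
  have hcn := countLE_le j p
  obtain ⟨had, hdn, hret, hbelow⟩ :=
    nextReturn_spec (m := m) (p := p) (a := countLE j p - 1) (by omega)
  refine ⟨⟨countLE j p - 1, by omega⟩, ⟨_, hdn⟩,
    { one_le := by dsimp only; omega
      le := by simp only [Fin.le_def]; exact had
      apply_left := le_antisymm ((lt_countLE_iff hmono j _).1 (by dsimp only; omega))
        (hij.ge.trans (hmono (by simp only [Fin.le_def]; omega)))
      le_iff := fun k => by rw [← lt_countLE_iff hmono]; simp only [Fin.le_def]; omega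
      add_le_of_mem := fun k hak hkd => ?_
      le_of_gt := fun k hk => ?_ }⟩
  · simp only [Fin.lt_def, Fin.le_def] at hak hkd
    obtain ⟨x, hx⟩ : ∃ x, (k : ℕ) = x + 1 := ⟨k - 1, by omega⟩
    have := hbelow x (by omega) (by omega) k hx
    rw [hx, mul_add_one]
    omega
  · simp only [Fin.lt_def] at hk
    exact (hret ⟨_ + 1, by omega⟩ rfl).trans (hmono (by simp only [Fin.le_def]; omega))

variable [NeZero n]

def promote (m j : ℕ) (p : Fin n → ℕ) : Fin n → ℕ :=
  let a := countLE j p - 1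
  let d := nextReturn m p a
  slideLeft p (Fin.ofNat n a) (Fin.ofNat n d) (m * d + 1)

def demote (m j : ℕ) (p : Fin n → ℕ) : Fin n → ℕ :=
  slideRight p (Fin.ofNat n (countLE j p)) (Fin.ofNat n (firstLucky m p)) j

variable {a d : Fin n}

lemma IsPromoteWindow.promote_eq (w : IsPromoteWindow m j p a d) :
    promote m j p = slideLeft p a d (m * d + 1) := by
  have hc : countLE j p = a + 1 := by
    rw [countLE, ← Fin.card_Iic a]
    congr 1
    ext i
    simp [w.le_iff]
  have hd : nextReturn m p a = d := by
    refine IsLeast.csInf_eq ⟨⟨w.le, fun i hi => w.le_of_gt i (by omega)⟩, ?_⟩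
    rintro x ⟨hax, hx⟩
    by_contra! hxd
    have hlt := hx ⟨x + 1, by omega⟩ rfl
    have hle := w.add_le_of_mem ⟨x + 1, by omega⟩ (by simp only [Fin.lt_def]; omega)
      (by simp only [Fin.le_def]; omega)
    rw [Fin.val_mk, mul_add_one] at hle
    omega
  simp only [promote, hc, Nat.add_sub_cancel, Fin.ofNat_val_eq_self, hd]

lemma IsDemoteWindow.demote_eq (w : IsDemoteWindow m j p a d) :
    demote m j p = slideRight p a d j := by
  have hc : countLE j p = a := by
    rw [countLE, ← Fin.card_Iio a]
    congr 1
    ext i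
    simp [w.le_iff]
  have hd : firstLucky m p = d := by
    refine IsLeast.csInf_eq ⟨⟨by have := w.one_le; have := w.le; omega, d, rfl, w.apply_right⟩, ?_⟩
    rintro x ⟨hx1, i, rfl, hi⟩
    by_contra! hid
    have := w.le_of_lt i hx1 hid
    omega
  simp only [demote, hc, hd, Fin.ofNat_val_eq_self]

lemma exists_isDemoteWindow (hp : p ∈ PK m n) (hjm : j ≤ m) (hj : 1 ≤ j)
    (hlucky : ∃ i : Fin n, 1 ≤ (i : ℕ) ∧ p i = m * i + 1) : ∃ e d, IsDemoteWindow m j p e d := by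
  obtain ⟨hmono, hbd⟩ := mem_PK.1 hp
  obtain ⟨i, hi1, hi⟩ := hlucky
  set S := {x | 1 ≤ x ∧ ∃ i : Fin n, (i : ℕ) = x ∧ p i = m * x + 1}
  have hS : (i : ℕ) ∈ S := ⟨hi1, i, rfl, hi⟩
  obtain ⟨hd1, d, hd, hdl⟩ := Nat.sInf_mem (Set.nonempty_of_mem hS)
  have hmin : ∀ k : Fin n, 1 ≤ (k : ℕ) → k < d → p k ≤ m * k := by
    intro k hk1 hkd
    by_contra! h
    have := (hbd k).2
    exact Nat.notMem_of_lt_sInf (s := S) (hd ▸ Fin.lt_def.1 hkd) ⟨hk1, k, rfl, by omega⟩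
  rw [← hd] at hd1 hdl
  have hmd : m ≤ m * d := Nat.le_mul_of_pos_right m hd1
  have h0 := (lt_countLE_iff hmono j 0).2 (by rw [apply_zero_of_mem_PK hp]; exact hj)
  have hcd : countLE j p ≤ d := not_lt.1 fun h => by
    have := (lt_countLE_iff hmono j d).1 h
    omega
  rw [Fin.val_zero] at h0
  refine ⟨⟨countLE j p, by omega⟩, d,
    { one_le := by dsimp only; omega
      le := by simp only [Fin.le_def]; exact hcd
      le_iff := fun k => by rw [← lt_countLE_iff hmono]; simp only [Fin.lt_def]
      apply_right := hdl
      le_of_lt := hmin }⟩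

end Parking

section Windows

variable {m n j : ℕ} {p : Fin n → ℕ} {a d : Fin n}

namespace IsPromoteWindow

variable (w : IsPromoteWindow m j p a d)
include w

lemma apply_le_mul (hjm : j ≤ m) (i : Fin n) (hai : a ≤ i) (hid : i ≤ d) : p i ≤ m * i := by
  rcases hai.lt_or_eq with hai | rfl
  · have := w.add_le_of_mem i hai hid
    omega
  · have := Nat.le_mul_of_pos_right m w.one_le
    rw [w.apply_left]
    omega

variable [NeZero n]

lemma slideLeft_mem_PK (hp : p ∈ PK m n) : slideLeft p a d (m * d + 1) ∈ PK m n := by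
  obtain ⟨hmono, hbd⟩ := mem_PK.1 hp
  refine mem_PK.2 ⟨monotone_slideLeft hmono w.le (hbd d).2 w.le_of_gt, fun i => ?_⟩
  by_cases hid : i = d
  · rw [hid, slideLeft, Function.update_self]
    omega
  obtain ⟨k, hk, ⟨hai, hid', hki⟩ | ⟨-, rfl⟩⟩ := slideLeft_apply_of_ne p _ w.le hid
  · have hk' := w.add_le_of_mem k (by omega) (by omega)
    have := (hbd k).1
    rw [hki, mul_add_one] at hk'
    rw [hk]
    omega
  · rw [hk]
    exact hbd k

lemma luck_slideLeft (hjm : j ≤ m) :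
    luck m (slideLeft p a d (m * d + 1)) = luck m p + 1 := by
  have hd : d ∉ ({i | p i = m * i + 1} : Finset (Fin n)) := by
    simpa using (w.apply_le_mul hjm d w.le le_rfl).trans_lt (Nat.lt_succ_self _) |>.ne
  rw [luck, luck, ← card_insert_of_notMem hd]
  congr 1
  ext i
  simp only [mem_filter, mem_univ, true_and, mem_insert]
  by_cases hid : i = d
  · simp [hid, slideLeft]
  obtain ⟨k, hk, ⟨hai, hid', hki⟩ | ⟨-, rfl⟩⟩ := slideLeft_apply_of_ne p (m * d + 1) w.le hid
  · have hk' := w.add_le_of_mem k (by omega) (by omega)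
    have hi := w.apply_le_mul hjm i hai hid'.le
    rw [hki, mul_add_one] at hk'
    rw [hk]
    omega
  · rw [hk]
    simp [hid]

lemma freq_slideLeft_add {c : ℕ} (hc : c ≤ m) :
    freq c (slideLeft p a d (m * d + 1)) + (if j = c then 1 else 0) = freq c p := by
  have h := card_filter_slideLeft_add (· = c) p (m * d + 1) w.le
  have := Nat.le_mul_of_pos_right m (w.one_le.trans w.le)
  rw [w.apply_left, if_neg (show m * d + 1 ≠ c by omega), add_zero] at h
  exact h

lemma isDemoteWindow (hjm : j ≤ m) : IsDemoteWindow m j (slideLeft p a d (m * d + 1)) a d where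
  one_le := w.one_le
  le := w.le
  le_iff i := by
    have := w.le
    by_cases hid : i = d
    · have := Nat.le_mul_of_pos_right m (w.one_le.trans w.le)
      simp only [hid, slideLeft, Function.update_self]
      omega
    obtain ⟨k, hk, ⟨hai, -, hki⟩ | ⟨hi, rfl⟩⟩ := slideLeft_apply_of_ne p _ w.le hid
    · rw [hk, w.le_iff]
      omega
    · rw [hk, w.le_iff]
      omega
  apply_right := by rw [slideLeft, Function.update_self]
  le_of_lt i hi1 hid := by
    obtain ⟨k, hk, ⟨hai, hid', hki⟩ | ⟨hi, rfl⟩⟩ := slideLeft_apply_of_ne p _ w.le hid.ne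
    · have hk' := w.add_le_of_mem k (by omega) (by omega)
      rw [hki, mul_add_one] at hk'
      rw [hk]
      omega
    · have := Nat.le_mul_of_pos_right m hi1
      have := (w.le_iff k).2 (by omega)
      rw [hk]
      omega

end IsPromoteWindow

namespace IsDemoteWindow

variable (w : IsDemoteWindow m j p a d)
include w

lemma lt_apply_left : j < p a :=
  not_le.1 fun h => lt_irrefl a ((w.le_iff a).1 h)

variable [NeZero n]

lemma slideRight_mem_PK (hp : p ∈ PK m n) (hj : 1 ≤ j) (hjm : j ≤ m) :
    slideRight p a d j ∈ PK m n := by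
  obtain ⟨hmono, hbd⟩ := mem_PK.1 hp
  refine mem_PK.2 ⟨monotone_slideRight hmono w.le (fun i hi => (w.le_iff i).2 hi)
    w.lt_apply_left.le, fun i => ?_⟩
  by_cases hia : i = a
  · have := Nat.le_mul_of_pos_right m w.one_le
    rw [hia, slideRight, Function.update_self]
    omega
  obtain ⟨k, hk, ⟨-, -, hki⟩ | ⟨-, rfl⟩⟩ := slideRight_apply_of_ne p j w.le hia
  · have := hbd k
    have : m * k ≤ m * i := Nat.mul_le_mul_left m (by omega)
    rw [hk]
    omega
  · rw [hk]
    exact hbd k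

lemma luck_slideRight (hp : p ∈ PK m n) (hj : 1 ≤ j) (hjm : j ≤ m) :
    luck m (slideRight p a d j) + 1 = luck m p := by
  have hbd := (mem_PK.1 hp).2
  have hd : d ∈ ({i | p i = m * i + 1} : Finset (Fin n)) := by simpa using w.apply_right
  rw [luck, luck, ← card_erase_add_one hd]
  congr 2
  ext i
  simp only [mem_filter, mem_univ, true_and, mem_erase]
  have := w.le
  by_cases hia : i = a
  · have := Nat.le_mul_of_pos_right m w.one_le
    rw [hia, slideRight, Function.update_self]
    rcases w.le.lt_or_eq with had | rfl
    · have := w.le_of_lt a w.one_le had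
      omega
    · omega
  obtain ⟨k, hk, ⟨hai, hid, hki⟩ | ⟨hi, rfl⟩⟩ := slideRight_apply_of_ne p j w.le hia
  · have hk' := hbd k
    have : m * k + m = m * i := by rw [← hki, mul_add_one]
    rw [hk]
    rcases hid.lt_or_eq with hid | rfl
    · have := w.le_of_lt i (by omega) hid
      omega
    · omega
  · rw [hk]
    have : k ≠ d := by omega
    tauto

lemma freq_slideRight {c : ℕ} (hc : c ≤ m) :
    freq c (slideRight p a d j) = freq c p + if j = c then 1 else 0 := by
  have h := card_filter_slideRight_add (· = c) p j w.le
  have := Nat.le_mul_of_pos_right m (w.one_le.trans w.le)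
  rw [w.apply_right, if_neg (show m * d + 1 ≠ c by omega), add_zero] at h
  exact h

lemma isPromoteWindow (hp : p ∈ PK m n) : IsPromoteWindow m j (slideRight p a d j) a d where
  one_le := w.one_le
  le := w.le
  apply_left := by rw [slideRight, Function.update_self]
  le_iff i := by
    by_cases hia : i = a
    · simp [hia, slideRight]
    obtain ⟨k, hk, ⟨hai, -, hki⟩ | ⟨hi, rfl⟩⟩ := slideRight_apply_of_ne p j w.le hia
    · rw [hk, w.le_iff]
      omega
    · rw [hk, w.le_iff]
      omega
  add_le_of_mem i hai hid := by
    obtain ⟨k, hk, ⟨-, -, hki⟩ | ⟨hi, -⟩⟩ := slideRight_apply_of_ne p j w.le hai.ne'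
    · have := w.one_le
      have := w.le_of_lt k (by omega) (by omega)
      rw [hk, ← hki, mul_add_one]
      omega
    · exact absurd ⟨hai, hid⟩ hi
  le_of_gt i hdi := by
    have := w.le
    obtain ⟨k, hk, ⟨-, hid, -⟩ | ⟨-, rfl⟩⟩ := slideRight_apply_of_ne p j w.le (show i ≠ a by omega)
    · exact absurd hid (not_le.2 hdi)
    · rw [hk, ← w.apply_right]
      exact (mem_PK.1 hp).1 hdi.le

end IsDemoteWindow

end Windows

section Transfer

variable {m n : ℕ} [NeZero n] {p : Fin n → ℕ}

/-- Since the first car always prefers `1`, a car other than the first prefers `j ≠ 0` exactly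
when `2 ≤ stat m p j`. -/
def stat (m : ℕ) (p : Fin n → ℕ) (i : Fin (m + 1)) : ℕ :=
  if i = 0 then luck m p else freq i p + if (i : ℕ) = 1 then 0 else 1

lemma exists_pos_eq_of_two_le_stat (hp : p ∈ PK m n) {j : Fin (m + 1)} (hj : j ≠ 0)
    (h : 2 ≤ stat m p j) : ∃ i : Fin n, 1 ≤ (i : ℕ) ∧ p i = j := by
  rw [stat, if_neg hj] at h
  split_ifs at h with hj1
  · obtain ⟨i, hi, hi1⟩ := Fin.exists_mem_one_le_of_one_lt_card (s := {i | p i = j}) h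
    exact ⟨i, hi1, (mem_filter.1 hi).2⟩
  · obtain ⟨i, hi⟩ := card_pos.1 (show 0 < freq j p by omega)
    rw [mem_filter] at hi
    refine ⟨i, Nat.one_le_iff_ne_zero.2 fun hi0 => hj1 ?_, hi.2⟩
    rw [← hi.2, show i = 0 by simpa using hi0, apply_zero_of_mem_PK hp]

lemma exists_pos_lucky_of_two_le_luck (h : 2 ≤ luck m p) :
    ∃ i : Fin n, 1 ≤ (i : ℕ) ∧ p i = m * i + 1 := by
  obtain ⟨i, hi, hi1⟩ := Fin.exists_mem_one_le_of_one_lt_card (s := {i | p i = m * i + 1}) h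
  exact ⟨i, hi1, (mem_filter.1 hi).2⟩

variable {j : Fin (m + 1)}

lemma promote_mem_PK (hp : p ∈ PK m n) (hj : j ≠ 0) (h : 2 ≤ stat m p j) :
    promote m j p ∈ PK m n := by
  obtain ⟨a, d, w⟩ := exists_isPromoteWindow hp (exists_pos_eq_of_two_le_stat hp hj h)
  rw [w.promote_eq]
  exact w.slideLeft_mem_PK hp

lemma demote_mem_PK (hp : p ∈ PK m n) (hj : j ≠ 0) (h : 2 ≤ stat m p 0) :
    demote m j p ∈ PK m n := by
  have hj1 : 1 ≤ (j : ℕ) := Nat.one_le_iff_ne_zero.2 (Fin.val_ne_zero_iff.2 hj)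
  rw [stat, if_pos rfl] at h
  obtain ⟨a, d, w⟩ := exists_isDemoteWindow hp (Fin.is_le j) hj1
    (exists_pos_lucky_of_two_le_luck h)
  rw [w.demote_eq]
  exact w.slideRight_mem_PK hp hj1 (Fin.is_le j)

lemma stat_promote_add (hp : p ∈ PK m n) (hj : j ≠ 0) (h : 2 ≤ stat m p j) :
    stat m (promote m j p) + Pi.single j 1 = stat m p + Pi.single 0 1 := by
  obtain ⟨a, d, w⟩ := exists_isPromoteWindow hp (exists_pos_eq_of_two_le_stat hp hj h)
  rw [w.promote_eq]
  funext i
  have hfreq := w.freq_slideLeft_add (Fin.is_le i)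
  simp only [Pi.add_apply, Pi.single_apply, stat]
  by_cases hi0 : i = 0
  · simp [hi0, hj.symm, w.luck_slideLeft (Fin.is_le j)]
  · by_cases hij : i = j
    · subst hij
      simp only [hi0, if_true, if_false] at hfreq ⊢
      omega
    · rw [if_neg (fun h => hij (Fin.ext h).symm)] at hfreq
      simpa [hi0, hij] using hfreq

lemma stat_demote_add (hp : p ∈ PK m n) (hj : j ≠ 0) (h : 2 ≤ stat m p 0) :
    stat m (demote m j p) + Pi.single 0 1 = stat m p + Pi.single j 1 := by
  have hj1 : 1 ≤ (j : ℕ) := Nat.one_le_iff_ne_zero.2 (Fin.val_ne_zero_iff.2 hj)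
  rw [stat, if_pos rfl] at h
  obtain ⟨a, d, w⟩ := exists_isDemoteWindow hp (Fin.is_le j) hj1
    (exists_pos_lucky_of_two_le_luck h)
  rw [w.demote_eq]
  funext i
  have hfreq := w.freq_slideRight (Fin.is_le i)
  simp only [Pi.add_apply, Pi.single_apply, stat]
  by_cases hi0 : i = 0
  · have := w.luck_slideRight hp hj1 (Fin.is_le j)
    simp [hi0, Ne.symm hj]
    omega
  · by_cases hij : i = j
    · subst hij
      simp only [hi0, if_true, if_false] at hfreq ⊢
      omega
    · rw [if_neg (fun h => hij (Fin.ext h).symm)] at hfreq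
      simp [hi0, hij, hfreq]

lemma demote_promote (hp : p ∈ PK m n) (hj : j ≠ 0) (h : 2 ≤ stat m p j) :
    demote m j (promote m j p) = p := by
  obtain ⟨a, d, w⟩ := exists_isPromoteWindow hp (exists_pos_eq_of_two_le_stat hp hj h)
  rw [w.promote_eq, (w.isDemoteWindow (Fin.is_le j)).demote_eq,
    slideRight_slideLeft w.le w.apply_left]

lemma promote_demote (hp : p ∈ PK m n) (hj : j ≠ 0) (h : 2 ≤ stat m p 0) :
    promote m j (demote m j p) = p := by
  have hj1 : 1 ≤ (j : ℕ) := Nat.one_le_iff_ne_zero.2 (Fin.val_ne_zero_iff.2 hj)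
  rw [stat, if_pos rfl] at h
  obtain ⟨a, d, w⟩ := exists_isDemoteWindow hp (Fin.is_le j) hj1
    (exists_pos_lucky_of_two_le_luck h)
  rw [w.demote_eq, (w.isPromoteWindow hp).promote_eq, slideLeft_slideRight w.le w.apply_right]

end Transfer

section Redistribution

variable {ι α : Type*} [Fintype ι] [DecidableEq ι]

def TransferInvariant (i₀ : ι) (F : (ι → ℕ) → α) : Prop :=
  ∀ (k k' : ι → ℕ) (j : ι), j ≠ i₀ → 1 ≤ k i₀ → 1 ≤ k' j →
    k' + Pi.single j 1 = k + Pi.single i₀ 1 → F k = F k'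

lemma exists_transfer (i₀ : ι) {k : ι → ℕ} (hk : ∀ i, 1 ≤ k i) {j : ι} (hj : j ≠ i₀)
    (hkj : 2 ≤ k j) :
    ∃ k' : ι → ℕ, (∀ i, 1 ≤ k' i) ∧ k' + Pi.single j 1 = k + Pi.single i₀ 1 ∧
      ∑ i ∈ univ.erase i₀, k' i < ∑ i ∈ univ.erase i₀, k i := by
  set k' := Function.update (Function.update k i₀ (k i₀ + 1)) j (k j - 1)
  have hk'j : k' j = k j - 1 := Function.update_self ..
  have hk'i₀ : k' i₀ = k i₀ + 1 := by simp [k', Function.update_of_ne hj.symm]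
  have hk'i : ∀ i, i ≠ j → i ≠ i₀ → k' i = k i := fun i hij hi₀ => by
    simp [k', Function.update_of_ne hij, Function.update_of_ne hi₀]
  refine ⟨k', fun i => ?_, funext fun i => ?_, sum_lt_sum (fun i hi => ?_)
    ⟨j, mem_erase.2 ⟨hj, mem_univ j⟩, by omega⟩⟩
  · by_cases hij : i = j
    · rw [hij, hk'j]; omega
    by_cases hii₀ : i = i₀
    · rw [hii₀, hk'i₀]; omega
    · rw [hk'i i hij hii₀]; exact hk i
  · by_cases hij : i = j
    · subst hij
      simp [hj, hk'j]
      omega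
    by_cases hii₀ : i = i₀
    · subst hii₀
      simp [hij, hk'i₀]
    · simp [hij, hii₀, hk'i i hij hii₀]
  · by_cases hij : i = j
    · rw [hij, hk'j]; omega
    · rw [hk'i i hij (ne_of_mem_erase hi)]

lemma TransferInvariant.exists_eq_one_of_ne {i₀ : ι} {F : (ι → ℕ) → α}
    (hF : TransferInvariant i₀ F) (k : ι → ℕ) (hk : ∀ i, 1 ≤ k i) :
    ∃ k₀ : ι → ℕ, (∀ j, j ≠ i₀ → k₀ j = 1) ∧ ∑ i, k₀ i = ∑ i, k i ∧ F k = F k₀ := by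
  induction hs : ∑ i ∈ univ.erase i₀, k i using Nat.strong_induction_on generalizing k with
  | _ s ih =>
  by_cases hall : ∀ j, j ≠ i₀ → k j = 1
  · exact ⟨k, hall, rfl, rfl⟩
  simp only [not_forall] at hall
  obtain ⟨j, hj, hkj⟩ := hall
  obtain ⟨k', hk', hmove, hlt⟩ := exists_transfer i₀ hk hj (by have := hk j; omega)
  obtain ⟨k₀, hk₀, hsum, hFk'⟩ := ih _ (hs ▸ hlt) k' hk' rfl
  refine ⟨k₀, hk₀, ?_, (hF k k' j hj (hk i₀) (hk' j) hmove).trans hFk'⟩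
  have := congr_arg (fun f => ∑ i, f i) hmove
  simp only [Pi.add_apply, sum_add_distrib, sum_pi_single', mem_univ, if_true] at this
  omega

theorem TransferInvariant.eq_of_sum_eq {i₀ : ι} {F : (ι → ℕ) → α}
    (hF : TransferInvariant i₀ F) {k l : ι → ℕ} (hk : ∀ i, 1 ≤ k i) (hl : ∀ i, 1 ≤ l i)
    (hsum : ∑ i, k i = ∑ i, l i) : F k = F l := by
  obtain ⟨k₀, hk₀, hks, hFk⟩ := hF.exists_eq_one_of_ne k hk
  obtain ⟨l₀, hl₀, hls, hFl⟩ := hF.exists_eq_one_of_ne l hl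
  suffices k₀ = l₀ by rw [hFk, hFl, this]
  funext i
  by_cases hi : i = i₀
  · subst hi
    have hk₀s := add_sum_erase univ k₀ (mem_univ i)
    have hl₀s := add_sum_erase univ l₀ (mem_univ i)
    rw [sum_congr rfl fun j hj => hk₀ j (ne_of_mem_erase hj)] at hk₀s
    rw [sum_congr rfl fun j hj => hl₀ j (ne_of_mem_erase hj)] at hl₀s
    omega
  · rw [hk₀ i hi, hl₀ i hi]

end Redistribution

theorem transferInvariant_card_filter_stat (m n : ℕ) [NeZero n] :
    TransferInvariant 0 fun k : Fin (m + 1) → ℕ => #{p ∈ PK m n | stat m p = k} := by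
  intro k k' j hj hk0 hk'j h
  have hkj : 2 ≤ k j := by
    have := congr_fun h j
    simp only [Pi.add_apply, Pi.single_eq_same, Pi.single_eq_of_ne hj] at this
    omega
  have hk'0 : 2 ≤ k' 0 := by
    have := congr_fun h 0
    simp only [Pi.add_apply, Pi.single_eq_same, Pi.single_eq_of_ne' hj] at this
    omega
  refine card_nbij' (promote m j) (demote m j) ?_ ?_ ?_ ?_
  · rintro p hp
    simp only [mem_coe, mem_filter] at hp ⊢
    obtain ⟨hp, rfl⟩ := hp
    exact ⟨promote_mem_PK hp hj hkj, add_right_cancel ((stat_promote_add hp hj hkj).trans h.symm)⟩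
  · rintro p hp
    simp only [mem_coe, mem_filter] at hp ⊢
    obtain ⟨hp, rfl⟩ := hp
    exact ⟨demote_mem_PK hp hj hk'0, add_right_cancel ((stat_demote_add hp hj hk'0).trans h)⟩
  · rintro p hp
    simp only [mem_coe, mem_filter] at hp
    exact demote_promote hp.1 hj (hp.2 ▸ hkj)
  · rintro p hp
    simp only [mem_coe, mem_filter] at hp
    exact promote_demote hp.1 hj (hp.2 ▸ hk'0)

lemma stat_eq_iff {m n : ℕ} (hm : 1 ≤ m) {k : Fin (m + 1) → ℕ} (hk : ∀ i, 1 ≤ k i)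
    (p : Fin n → ℕ) :
    stat m p = k ↔ luck m p = k 0 ∧ freq 1 p = k 1 ∧
      ∀ j : Fin (m + 1), 2 ≤ (j : ℕ) → freq (j : ℕ) p = k j - 1 := by
  have h1 : ((1 : Fin (m + 1)) : ℕ) = 1 := by rw [Fin.val_one', Nat.mod_eq_of_lt (by omega)]
  have h1' : (1 : Fin (m + 1)) ≠ 0 := fun h => by simp [h] at h1
  rw [funext_iff]
  constructor
  · intro h
    have hk1 := h 1
    rw [stat, if_neg h1', h1, if_pos rfl, add_zero] at hk1
    refine ⟨by simpa [stat] using h 0, hk1, fun j hj => ?_⟩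
    have := h j
    rw [stat, if_neg (fun h => by simp [h] at hj), if_neg (by omega)] at this
    omega
  · rintro ⟨h0, h1k, hj⟩ i
    unfold stat
    split_ifs with hi0 hi1
    · rw [hi0, h0]
    · obtain rfl : i = 1 := Fin.ext (hi1.trans h1.symm)
      rw [h1, add_zero, h1k]
    · have := hj i (by have := Fin.val_ne_zero_iff.2 hi0; omega)
      have := hk i
      omega

theorem stmt18 (m : ℕ) (hm : 1 ≤ m) (n : ℕ) (hn : 1 ≤ n)
    (k l : Fin (m + 1) → ℕ) (hk : ∀ i, 1 ≤ k i) (hl : ∀ i, 1 ≤ l i)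
    (hsum : ∑ i, k i = ∑ i, l i) :
    ((PK m n).filter (fun p => luck m p = k 0 ∧ freq 1 p = k 1 ∧
        ∀ j : Fin (m + 1), 2 ≤ (j : ℕ) → freq (j : ℕ) p = k j - 1)).card =
      ((PK m n).filter (fun p => luck m p = l 0 ∧ freq 1 p = l 1 ∧
        ∀ j : Fin (m + 1), 2 ≤ (j : ℕ) → freq (j : ℕ) p = l j - 1)).card := by
  have : NeZero n := ⟨by omega⟩
  simp only [← stat_eq_iff hm hk, ← stat_eq_iff hm hl]
  exact (transferInvariant_card_filter_stat m n).eq_of_sum_eq hk hl hsum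

end
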